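/- arXiv:2006.15734 — 4 statements merged into one kernel-verified Lean document; each statement's English description precedes it below -/
import Mathlib

section
/- Suppose there exists a k-GDD of type v_1^{u_1} v_2^{u_2} ... v_n^{u_n} where v_i = (k−1)r_i + k + 1, and for each i there exists a pentagonal geometry PENT(k, r_i) with exactly p_i opposite line pairs. Let N = Σ u_i, R = Σ u_i r_i, P = Σ u_i p_i, and assume (k−1) divides (N−1)(k+1). Then there exists a pentagonal geometry PENT(k, R + (N − 1)(k + 1)/(k − 1)) with exactly P opposite line pairs. -/
/-- Two points are collinear if they are equal or some line contains both. -/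
def Collin {P : Type} [DecidableEq P] (Lines : Finset (Finset P)) (x y : P) : Prop :=
  x = y ∨ ∃ L ∈ Lines, x ∈ L ∧ y ∈ L

/-- A pentagonal geometry PENT(k, r): a partial linear space where every line has `k`
points, every point is on `r` lines, and for every point there is a line consisting
exactly of the points not collinear with it. -/
structure IsPentGeom {P : Type} [DecidableEq P] (Lines : Finset (Finset P)) (k r : ℕ) : Prop where
  line_size : ∀ L ∈ Lines, L.card = k
  point_deg : ∀ x : P, (Lines.filter (fun L => x ∈ L)).card = r
  plinear : ∀ x y : P, x ≠ y → ∀ L ∈ Lines, x ∈ L → y ∈ L →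
      ∀ M ∈ Lines, x ∈ M → y ∈ M → L = M
  opp : ∀ x : P, ∃ L ∈ Lines, ∀ y : P, y ∈ L ↔ ¬ Collin Lines x y

/-- An opposite line pair: two disjoint lines such that each is the opposite line of
every point of the other. -/
def IsOppPair {P : Type} [DecidableEq P] (Lines : Finset (Finset P)) (L M : Finset P) : Prop :=
  L ∈ Lines ∧ M ∈ Lines ∧ Disjoint L M ∧
  (∀ x ∈ L, ∀ y : P, y ∈ M ↔ ¬ Collin Lines x y) ∧
  (∀ y ∈ M, ∀ x : P, x ∈ L ↔ ¬ Collin Lines y x)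

/-- A group divisible design with block size `k`: the groups partition the point set,
every pair of points from distinct groups lies in exactly one block, and no pair of
points from a common group lies in any block. -/
structure IsGDD {V : Type} [DecidableEq V] (k : ℕ) (Groups Blocks : Finset (Finset V)) : Prop where
  partition : ∀ x : V, ∃! G, G ∈ Groups ∧ x ∈ G
  blocks_nonempty : Blocks.Nonempty
  block_size : ∀ B ∈ Blocks, B.card = k
  cross_pair : ∀ x y : V, x ≠ y → (∀ G ∈ Groups, ¬ (x ∈ G ∧ y ∈ G)) →
      ∃! B, B ∈ Blocks ∧ x ∈ B ∧ y ∈ B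
  within_pair : ∀ x y : V, x ≠ y → ∀ G ∈ Groups, x ∈ G → y ∈ G →
      ∀ B ∈ Blocks, ¬ (x ∈ B ∧ y ∈ B)

/-- The number of (unordered) opposite line pairs of a pentagonal geometry. -/
noncomputable def oppPairCount {P : Type} [DecidableEq P] (Lines : Finset (Finset P)) : ℕ :=
  Set.ncard {s : Finset (Finset P) | ∃ L M : Finset P, s = {L, M} ∧ IsOppPair Lines L M}


/-!
Keep the blocks of the GDD as lines and fill every group `G` with a copy of a PENT(k, r_G).
Two points of different groups lie on a unique block and no block meets a group twice, so
collinearity inside a group is that of its small geometry and everything outside the group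
of `x` is collinear with `x`. Hence opposite lines, and opposite line pairs, are exactly those
of the small geometries. A point `x` of `G` lies on `(|V| - |G|)/(k - 1)` blocks, and
`|V| - |G| = (k - 1)(r' - r_G)` once `|V| = (k - 1)r' + k + 1` and `|G| = (k - 1)r_G + k + 1`.
-/

open Finset

theorem Multiset.exists_map_eq_of_map_eq_of_nodup {α β γ : Type*} [Nonempty β]
    {f : α → γ} {g : β → γ} {s : Multiset α} (hs : s.Nodup) {t : Multiset β}
    (h : s.map f = t.map g) : ∃ φ : α → β, s.map φ = t ∧ ∀ a ∈ s, g (φ a) = f a := by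
  classical
  induction s using Multiset.induction_on generalizing t with
  | empty =>
    refine ⟨fun _ => Classical.arbitrary β, ?_, by simp⟩
    simpa [eq_comm] using h
  | cons a s ih =>
    obtain ⟨has, hs⟩ := Multiset.nodup_cons.1 hs
    have hfa : f a ∈ t.map g := by
      rw [← h]
      exact Multiset.mem_map_of_mem f (Multiset.mem_cons_self a s)
    obtain ⟨b, hb, hba⟩ := Multiset.mem_map.1 hfa
    rw [← Multiset.cons_erase hb, Multiset.map_cons, Multiset.map_cons, hba,
      Multiset.cons_inj_right] at h
    obtain ⟨φ, hφt, hφ⟩ := ih hs h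
    have hφa : ∀ x ∈ s, Function.update φ a b x = φ x := fun x hx =>
      Function.update_of_ne (ne_of_mem_of_not_mem hx has) _ _
    refine ⟨Function.update φ a b, ?_, ?_⟩
    · rw [Multiset.map_cons, Function.update_self, Multiset.map_congr rfl hφa, hφt,
        Multiset.cons_erase hb]
    · intro x hx
      rcases Multiset.mem_cons.1 hx with rfl | hx
      · rwa [Function.update_self]
      · rw [hφa x hx]
        exact hφ x hx

theorem Multiset.map_sum_replicate {ι β : Type*} (s : Finset ι) (u : ι → ℕ) (f : ι → β) :
    (∑ i ∈ s, replicate (u i) i).map f = ∑ i ∈ s, replicate (u i) (f i) := by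
  rw [← Multiset.coe_mapAddMonoidHom, map_sum]
  simp [Multiset.map_replicate]

theorem Multiset.sum_sum_replicate {ι M : Type*} [AddCommMonoid M] (s : Finset ι) (u : ι → ℕ)
    (a : ι → M) : (∑ i ∈ s, replicate (u i) (a i)).sum = ∑ i ∈ s, u i • a i := by
  rw [← Multiset.coe_sumAddMonoidHom, map_sum]
  simp

theorem Finset.exists_index_of_map_card_eq {V ι : Type*} [Fintype ι] [Nonempty ι]
    {Groups : Finset (Finset V)} {u v : ι → ℕ}
    (h : Groups.val.map card = ∑ i, Multiset.replicate (u i) (v i)) :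
    ∃ idx : Finset V → ι, (∀ G ∈ Groups, #G = v (idx G)) ∧
      ∀ p : ι → ℕ, ∑ G ∈ Groups, p (idx G) = ∑ i, u i * p i := by
  obtain ⟨idx, hidx, hcard⟩ := Multiset.exists_map_eq_of_map_eq_of_nodup Groups.nodup
    (h.trans (Multiset.map_sum_replicate univ u v).symm)
  refine ⟨idx, fun G hG => (hcard G hG).symm, fun p => ?_⟩
  calc ∑ G ∈ Groups, p (idx G) = ((Groups.val.map idx).map p).sum := by
        rw [Multiset.map_map, sum_map_val]
        rfl
    _ = ∑ i, u i * p i := by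
        rw [hidx, Multiset.map_sum_replicate, Multiset.sum_sum_replicate]
        simp only [smul_eq_mul]

theorem sub_one_mul_add_div_add_eq_sum_mul {ι : Type*} (s : Finset ι) (k : ℕ) (r u v : ι → ℕ)
    (hv : ∀ i ∈ s, v i = (k - 1) * r i + k + 1)
    (hdvd : (k - 1) ∣ ((∑ i ∈ s, u i) - 1) * (k + 1)) (hpos : 0 < ∑ i ∈ s, u i * v i) :
    (k - 1) * ((∑ i ∈ s, u i * r i) + ((∑ i ∈ s, u i) - 1) * (k + 1) / (k - 1)) + k + 1 =
      ∑ i ∈ s, u i * v i := by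
  have hsum : ∑ i ∈ s, u i * v i = (k - 1) * ∑ i ∈ s, u i * r i + (∑ i ∈ s, u i) * (k + 1) := by
    rw [Finset.mul_sum, Finset.sum_mul, ← sum_add_distrib]
    exact sum_congr rfl fun i hi => by rw [hv i hi]; ring
  have hN : 1 ≤ ∑ i ∈ s, u i := by
    by_contra! hN
    rw [Nat.lt_one_iff, sum_eq_zero_iff] at hN
    rw [sum_eq_zero fun i hi => by rw [hN i hi, zero_mul]] at hpos
    exact hpos.false
  obtain ⟨m, hm⟩ := Nat.exists_eq_add_of_le' hN
  rw [mul_add, Nat.mul_div_cancel' hdvd, hsum, hm, Nat.add_sub_cancel]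
  ring

section OppPairs

variable {P : Type} [DecidableEq P]

open scoped Classical in
noncomputable def oppPairs (Lines : Finset (Finset P)) : Finset (Finset (Finset P)) :=
  {s ∈ Lines.powerset | ∃ L M, s = {L, M} ∧ IsOppPair Lines L M}

theorem mem_oppPairs {Lines : Finset (Finset P)} {s : Finset (Finset P)} :
    s ∈ oppPairs Lines ↔ ∃ L M, s = {L, M} ∧ IsOppPair Lines L M := by
  classical
  rw [oppPairs, mem_filter, mem_powerset, and_iff_right_iff_imp]
  rintro ⟨L, M, rfl, hL, hM, -⟩
  exact insert_subset hL (singleton_subset_iff.2 hM)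

theorem oppPairCount_eq_card (Lines : Finset (Finset P)) :
    oppPairCount Lines = #(oppPairs Lines) := by
  rw [oppPairCount, ← Set.ncard_coe_finset]
  congr 1
  ext s
  exact mem_oppPairs.symm

end OppPairs

namespace IsGDD

variable {V : Type} [DecidableEq V] {k : ℕ} {Groups Blocks : Finset (Finset V)}
  {G H B : Finset V} {x y : V}

theorem eq_of_mem (hD : IsGDD k Groups Blocks) (hG : G ∈ Groups) (hH : H ∈ Groups)
    (hxG : x ∈ G) (hxH : x ∈ H) : G = H :=
  (hD.partition x).unique ⟨hG, hxG⟩ ⟨hH, hxH⟩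

theorem nonempty (hD : IsGDD k Groups Blocks) (hk : 1 ≤ k) : Nonempty V := by
  obtain ⟨B, hB⟩ := hD.blocks_nonempty
  obtain ⟨x, -⟩ := card_pos.1 (by rw [hD.block_size B hB]; omega : 0 < #B)
  exact ⟨x⟩

theorem not_subset_group (hD : IsGDD k Groups Blocks) (hk : 2 ≤ k) (hB : B ∈ Blocks)
    (hG : G ∈ Groups) : ¬ B ⊆ G := by
  intro hBG
  obtain ⟨x, hx, y, hy, hxy⟩ := one_lt_card.1 (by rw [hD.block_size B hB]; omega : 1 < #B)
  exact hD.within_pair x y hxy G hG (hBG hx) (hBG hy) B hB ⟨hx, hy⟩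

theorem existsUnique_block_of_not_mem (hD : IsGDD k Groups Blocks) (hG : G ∈ Groups)
    (hx : x ∈ G) (hy : y ∉ G) : ∃! B, B ∈ Blocks ∧ x ∈ B ∧ y ∈ B :=
  hD.cross_pair x y (by rintro rfl; exact hy hx) fun H hH ⟨hxH, hyH⟩ =>
    hy (hD.eq_of_mem hH hG hxH hx ▸ hyH)

/-- The blocks through `x`, with `x` removed, partition the points outside the group of `x`. -/
theorem card_filter_mem_mul_sub_one [Fintype V] (hD : IsGDD k Groups Blocks)
    (hG : G ∈ Groups) (hx : x ∈ G) : #{B ∈ Blocks | x ∈ B} * (k - 1) = Fintype.card V - #G := by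
  have hunion : univ \ G = {B ∈ Blocks | x ∈ B}.biUnion (·.erase x) := by
    ext y
    simp only [mem_sdiff, mem_univ, true_and, mem_biUnion, mem_filter, mem_erase]
    constructor
    · intro hy
      obtain ⟨B, ⟨hB, hxB, hyB⟩, -⟩ := hD.existsUnique_block_of_not_mem hG hx hy
      exact ⟨B, ⟨hB, hxB⟩, by rintro rfl; exact hy hx, hyB⟩
    · rintro ⟨B, ⟨hB, hxB⟩, hyx, hyB⟩ hyG
      exact hD.within_pair x y (Ne.symm hyx) G hG hx hyG B hB ⟨hxB, hyB⟩
  have hdisj : (({B ∈ Blocks | x ∈ B} : Finset _) : Set (Finset V)).PairwiseDisjoint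
      (·.erase x) := by
    intro B₁ hB₁ B₂ hB₂ hne
    obtain ⟨hB₁, hxB₁⟩ := mem_filter.1 (mem_coe.1 hB₁)
    obtain ⟨hB₂, hxB₂⟩ := mem_filter.1 (mem_coe.1 hB₂)
    refine disjoint_left.2 fun y hy₁ hy₂ => hne ?_
    obtain ⟨hyx, hyB₁⟩ := mem_erase.1 hy₁
    have hyG : y ∉ G := fun hyG =>
      hD.within_pair x y (Ne.symm hyx) G hG hx hyG B₁ hB₁ ⟨hxB₁, hyB₁⟩
    exact (hD.existsUnique_block_of_not_mem hG hx hyG).unique ⟨hB₁, hxB₁, hyB₁⟩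
      ⟨hB₂, hxB₂, (mem_erase.1 hy₂).2⟩
  rw [← card_univ, ← card_sdiff_of_subset (subset_univ G), hunion, card_biUnion hdisj]
  refine (sum_const_nat fun B hB => ?_).symm
  rw [mem_filter] at hB
  rw [card_erase_of_mem hB.2, hD.block_size B hB.1]

end IsGDD

section RangeEq

variable {V : Type} {P : Finset V → Type} {Groups : Finset (Finset V)} {e : ∀ G, P G ↪ V}
  {G : Finset V} {x : V}

theorem apply_mem_of_range_eq (he : ∀ G ∈ Groups, Set.range (e G) = G) (hG : G ∈ Groups)
    (a : P G) : e G a ∈ G := by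
  rw [← mem_coe, ← he G hG]
  exact Set.mem_range_self a

theorem exists_apply_eq_of_range_eq (he : ∀ G ∈ Groups, Set.range (e G) = G) (hG : G ∈ Groups)
    (hx : x ∈ G) : ∃ a, e G a = x := by
  rwa [← mem_coe, ← he G hG] at hx

theorem map_subset_of_range_eq (he : ∀ G ∈ Groups, Set.range (e G) = G) (hG : G ∈ Groups)
    (L : Finset (P G)) : L.map (e G) ⊆ G := by
  intro x hx
  obtain ⟨a, -, rfl⟩ := mem_map.1 hx
  exact apply_mem_of_range_eq he hG a

end RangeEq

section Fill

variable {V : Type} [DecidableEq V] {P : Finset V → Type}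

/-- The geometry put on a group `G` lives on its own type `P G`, which `e G` embeds onto `G`. -/
def groupLines (Groups : Finset (Finset V)) (e : ∀ G, P G ↪ V)
    (PG : ∀ G, Finset (Finset (P G))) : Finset (Finset V) :=
  Groups.biUnion fun G => (PG G).image (map (e G))

def fillGroups (Blocks Groups : Finset (Finset V)) (e : ∀ G, P G ↪ V)
    (PG : ∀ G, Finset (Finset (P G))) : Finset (Finset V) :=
  Blocks ∪ groupLines Groups e PG

variable {k : ℕ} {Groups Blocks : Finset (Finset V)} {e : ∀ G, P G ↪ V}
  {PG : ∀ G, Finset (Finset (P G))} {G : Finset V} {L M : Finset V} {x y : V}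

theorem mem_groupLines :
    M ∈ groupLines Groups e PG ↔ ∃ G ∈ Groups, ∃ L ∈ PG G, L.map (e G) = M := by
  simp [groupLines]

theorem exists_map_eq_of_mem_groupLines (hD : IsGDD k Groups Blocks)
    (he : ∀ G ∈ Groups, Set.range (e G) = G) (hM : M ∈ groupLines Groups e PG)
    (hG : G ∈ Groups) (hxG : x ∈ G) (hxM : x ∈ M) : ∃ L ∈ PG G, L.map (e G) = M := by
  obtain ⟨H, hH, L, hL, rfl⟩ := mem_groupLines.1 hM
  obtain rfl := hD.eq_of_mem hH hG (map_subset_of_range_eq he hH L hxM) hxG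
  exact ⟨L, hL, rfl⟩

theorem exists_map_eq_of_mem_fillGroups (hD : IsGDD k Groups Blocks) (hk : 2 ≤ k)
    (he : ∀ G ∈ Groups, Set.range (e G) = G) (hL : L ∈ fillGroups Blocks Groups e PG)
    (hG : G ∈ Groups) (hLG : L ⊆ G) (hxL : x ∈ L) : ∃ L' ∈ PG G, L'.map (e G) = L :=
  (mem_union.1 hL).elim (fun hB => absurd hLG (hD.not_subset_group hk hB hG)) fun hL =>
    exists_map_eq_of_mem_groupLines hD he hL hG (hLG hxL) hxL

theorem disjoint_groupLines (hD : IsGDD k Groups Blocks) (hk : 2 ≤ k)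
    (he : ∀ G ∈ Groups, Set.range (e G) = G) : Disjoint Blocks (groupLines Groups e PG) := by
  refine disjoint_left.2 fun B hB hBG => ?_
  obtain ⟨G, hG, L, -, rfl⟩ := mem_groupLines.1 hBG
  exact hD.not_subset_group hk hB hG (map_subset_of_range_eq he hG L)

theorem nonempty_of_mem_fillGroups (hD : IsGDD k Groups Blocks) (hk : 2 ≤ k)
    (hne : ∀ G ∈ Groups, ∀ L ∈ PG G, L.Nonempty) (hL : L ∈ fillGroups Blocks Groups e PG) :
    L.Nonempty := by
  rcases mem_union.1 hL with hB | hL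
  · exact card_pos.1 (by rw [hD.block_size L hB]; omega)
  · obtain ⟨G, hG, L', hL', rfl⟩ := mem_groupLines.1 hL
    exact (hne G hG L' hL').map

theorem mem_of_not_collin_fillGroups (hD : IsGDD k Groups Blocks) (hG : G ∈ Groups)
    (hx : x ∈ G) (h : ¬ Collin (fillGroups Blocks Groups e PG) x y) : y ∈ G := by
  by_contra hy
  obtain ⟨B, ⟨hB, hxB, hyB⟩, -⟩ := hD.existsUnique_block_of_not_mem hG hx hy
  exact h (Or.inr ⟨B, mem_union_left _ hB, hxB, hyB⟩)

variable [∀ G, DecidableEq (P G)]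

theorem collin_fillGroups_apply_iff (hD : IsGDD k Groups Blocks)
    (he : ∀ G ∈ Groups, Set.range (e G) = G) (hG : G ∈ Groups) {a b : P G} :
    Collin (fillGroups Blocks Groups e PG) (e G a) (e G b) ↔ Collin (PG G) a b := by
  constructor
  · rintro (hab | ⟨L, hL, haL, hbL⟩)
    · exact Or.inl ((e G).injective hab)
    by_cases hab : a = b
    · exact Or.inl hab
    rcases mem_union.1 hL with hB | hL
    · exact absurd ⟨haL, hbL⟩ (hD.within_pair _ _ ((e G).injective.ne hab) G hG
        (apply_mem_of_range_eq he hG a) (apply_mem_of_range_eq he hG b) L hB)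
    · obtain ⟨L', hL', rfl⟩ :=
        exists_map_eq_of_mem_groupLines hD he hL hG (apply_mem_of_range_eq he hG a) haL
      exact Or.inr ⟨L', hL', (mem_map' _).1 haL, (mem_map' _).1 hbL⟩
  · rintro (rfl | ⟨L, hL, haL, hbL⟩)
    · exact Or.inl rfl
    · exact Or.inr ⟨L.map (e G), mem_union_right _ (mem_groupLines.2 ⟨G, hG, L, hL, rfl⟩),
        (mem_map' _).2 haL, (mem_map' _).2 hbL⟩

theorem forall_mem_map_iff_not_collin_fillGroups (hD : IsGDD k Groups Blocks)
    (he : ∀ G ∈ Groups, Set.range (e G) = G) (hG : G ∈ Groups) {a : P G}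
    {M : Finset (P G)} :
    (∀ y, y ∈ M.map (e G) ↔ ¬ Collin (fillGroups Blocks Groups e PG) (e G a) y) ↔
      ∀ b, b ∈ M ↔ ¬ Collin (PG G) a b := by
  refine ⟨fun h b => ?_, fun h y => ?_⟩
  · rw [← mem_map' (e G), h, collin_fillGroups_apply_iff hD he hG]
  · by_cases hy : y ∈ G
    · obtain ⟨b, rfl⟩ := exists_apply_eq_of_range_eq he hG hy
      rw [mem_map', h, collin_fillGroups_apply_iff hD he hG]
    · exact iff_of_false (fun hyM => hy (map_subset_of_range_eq he hG M hyM)) fun hc =>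
        hy (mem_of_not_collin_fillGroups hD hG (apply_mem_of_range_eq he hG a) hc)

theorem card_filter_apply_mem_groupLines (hD : IsGDD k Groups Blocks)
    (he : ∀ G ∈ Groups, Set.range (e G) = G) (hG : G ∈ Groups) (a : P G) :
    #{L ∈ groupLines Groups e PG | e G a ∈ L} = #{L ∈ PG G | a ∈ L} := by
  rw [← card_image_of_injective _ (map_injective (e G))]
  congr 1
  ext M
  simp only [mem_filter, mem_image]
  constructor
  · rintro ⟨hM, haM⟩
    obtain ⟨L, hL, rfl⟩ :=
      exists_map_eq_of_mem_groupLines hD he hM hG (apply_mem_of_range_eq he hG a) haM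
    exact ⟨L, ⟨hL, (mem_map' _).1 haM⟩, rfl⟩
  · rintro ⟨L, ⟨hL, haL⟩, rfl⟩
    exact ⟨mem_groupLines.2 ⟨G, hG, L, hL, rfl⟩, (mem_map' _).2 haL⟩

theorem card_filter_mem_fillGroups [Fintype V] (hD : IsGDD k Groups Blocks) (hk : 2 ≤ k)
    (he : ∀ G ∈ Groups, Set.range (e G) = G) {r : Finset V → ℕ} {r' : ℕ}
    (hPG : ∀ G ∈ Groups, IsPentGeom (PG G) k (r G))
    (hGcard : ∀ G ∈ Groups, #G = (k - 1) * r G + k + 1)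
    (hVcard : Fintype.card V = (k - 1) * r' + k + 1) (x : V) :
    #{L ∈ fillGroups Blocks Groups e PG | x ∈ L} = r' := by
  obtain ⟨G, hG, hxG⟩ := (hD.partition x).exists
  have hblocks := hD.card_filter_mem_mul_sub_one hG hxG
  have hGV : #G ≤ Fintype.card V := card_le_univ G
  obtain ⟨a, rfl⟩ := exists_apply_eq_of_range_eq he hG hxG
  rw [fillGroups, filter_union, card_union_of_disjoint
      (disjoint_filter_filter (disjoint_groupLines hD hk he)),
    card_filter_apply_mem_groupLines hD he hG, (hPG G hG).point_deg]
  rw [hGcard G hG, hVcard] at hblocks hGV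
  refine Nat.eq_of_mul_eq_mul_left (by omega : 0 < k - 1) ?_
  rw [mul_add, mul_comm, hblocks]
  omega

theorem isPentGeom_fillGroups [Fintype V] (hD : IsGDD k Groups Blocks) (hk : 2 ≤ k)
    (he : ∀ G ∈ Groups, Set.range (e G) = G) {r : Finset V → ℕ} {r' : ℕ}
    (hPG : ∀ G ∈ Groups, IsPentGeom (PG G) k (r G))
    (hGcard : ∀ G ∈ Groups, #G = (k - 1) * r G + k + 1)
    (hVcard : Fintype.card V = (k - 1) * r' + k + 1) :
    IsPentGeom (fillGroups Blocks Groups e PG) k r' where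
  line_size L hL := by
    rcases mem_union.1 hL with hB | hL
    · exact hD.block_size L hB
    · obtain ⟨G, hG, L', hL', rfl⟩ := mem_groupLines.1 hL
      rw [card_map, (hPG G hG).line_size L' hL']
  point_deg := card_filter_mem_fillGroups hD hk he hPG hGcard hVcard
  plinear x y hxy L hL hxL hyL M hM hxM hyM := by
    rcases mem_union.1 hL with hLB | hLG <;> rcases mem_union.1 hM with hMB | hMG
    · refine (hD.cross_pair x y hxy fun G hG ⟨hxG, hyG⟩ => ?_).unique ⟨hLB, hxL, hyL⟩
        ⟨hMB, hxM, hyM⟩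
      exact hD.within_pair x y hxy G hG hxG hyG L hLB ⟨hxL, hyL⟩
    · obtain ⟨G, hG, M', -, rfl⟩ := mem_groupLines.1 hMG
      exact absurd ⟨hxL, hyL⟩ (hD.within_pair x y hxy G hG
        (map_subset_of_range_eq he hG M' hxM) (map_subset_of_range_eq he hG M' hyM) L hLB)
    · obtain ⟨G, hG, L', -, rfl⟩ := mem_groupLines.1 hLG
      exact absurd ⟨hxM, hyM⟩ (hD.within_pair x y hxy G hG
        (map_subset_of_range_eq he hG L' hxL) (map_subset_of_range_eq he hG L' hyL) M hMB)
    · obtain ⟨G, hG, L', hL', rfl⟩ := mem_groupLines.1 hLG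
      obtain ⟨M', hM', rfl⟩ := exists_map_eq_of_mem_groupLines hD he hMG hG
        (map_subset_of_range_eq he hG L' hxL) hxM
      obtain ⟨a, ha, rfl⟩ := mem_map.1 hxL
      obtain ⟨b, hb, rfl⟩ := mem_map.1 hyL
      rw [(hPG G hG).plinear a b (ne_of_apply_ne _ hxy) L' hL' ha hb M' hM'
        ((mem_map' _).1 hxM) ((mem_map' _).1 hyM)]
  opp x := by
    obtain ⟨G, hG, hxG⟩ := (hD.partition x).exists
    obtain ⟨a, rfl⟩ := exists_apply_eq_of_range_eq he hG hxG
    obtain ⟨L, hL, hopp⟩ := (hPG G hG).opp a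
    exact ⟨L.map (e G), mem_union_right _ (mem_groupLines.2 ⟨G, hG, L, hL, rfl⟩),
      (forall_mem_map_iff_not_collin_fillGroups hD he hG).2 hopp⟩

theorem isOppPair_fillGroups_map (hD : IsGDD k Groups Blocks)
    (he : ∀ G ∈ Groups, Set.range (e G) = G) (hG : G ∈ Groups) {L M : Finset (P G)}
    (h : IsOppPair (PG G) L M) :
    IsOppPair (fillGroups Blocks Groups e PG) (L.map (e G)) (M.map (e G)) := by
  obtain ⟨hL, hM, hLM, hLopp, hMopp⟩ := h
  refine ⟨mem_union_right _ (mem_groupLines.2 ⟨G, hG, L, hL, rfl⟩),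
    mem_union_right _ (mem_groupLines.2 ⟨G, hG, M, hM, rfl⟩), (disjoint_map _).2 hLM, ?_, ?_⟩
  · intro x hx
    obtain ⟨a, ha, rfl⟩ := mem_map.1 hx
    exact (forall_mem_map_iff_not_collin_fillGroups hD he hG).2 (hLopp a ha)
  · intro y hy
    obtain ⟨b, hb, rfl⟩ := mem_map.1 hy
    exact (forall_mem_map_iff_not_collin_fillGroups hD he hG).2 (hMopp b hb)

/-- Opposite lines are non-collinear with a point, so an opposite pair lies inside one group. -/
theorem exists_isOppPair_of_isOppPair_fillGroups (hD : IsGDD k Groups Blocks) (hk : 2 ≤ k)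
    (he : ∀ G ∈ Groups, Set.range (e G) = G) (hne : ∀ G ∈ Groups, ∀ L ∈ PG G, L.Nonempty)
    (h : IsOppPair (fillGroups Blocks Groups e PG) L M) :
    ∃ G ∈ Groups, ∃ L' M', IsOppPair (PG G) L' M' ∧ L'.map (e G) = L ∧ M'.map (e G) = M := by
  obtain ⟨hL, hM, hLM, hLopp, hMopp⟩ := h
  obtain ⟨x, hxL⟩ := nonempty_of_mem_fillGroups hD hk hne hL
  obtain ⟨y, hyM⟩ := nonempty_of_mem_fillGroups hD hk hne hM
  obtain ⟨G, hG, hxG⟩ := (hD.partition x).exists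
  have hMG : M ⊆ G := fun y hy =>
    mem_of_not_collin_fillGroups hD hG hxG ((hLopp x hxL y).1 hy)
  have hLG : L ⊆ G := fun x hx =>
    mem_of_not_collin_fillGroups hD hG (hMG hyM) ((hMopp y hyM x).1 hx)
  obtain ⟨L', hL', rfl⟩ := exists_map_eq_of_mem_fillGroups hD hk he hL hG hLG hxL
  obtain ⟨M', hM', rfl⟩ := exists_map_eq_of_mem_fillGroups hD hk he hM hG hMG hyM
  refine ⟨G, hG, L', M', ⟨hL', hM', (disjoint_map _).1 hLM, fun a ha => ?_, fun b hb => ?_⟩,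
    rfl, rfl⟩
  · exact (forall_mem_map_iff_not_collin_fillGroups hD he hG).1 (hLopp _ ((mem_map' _).2 ha))
  · exact (forall_mem_map_iff_not_collin_fillGroups hD he hG).1 (hMopp _ ((mem_map' _).2 hb))

theorem oppPairs_fillGroups (hD : IsGDD k Groups Blocks) (hk : 2 ≤ k)
    (he : ∀ G ∈ Groups, Set.range (e G) = G) (hne : ∀ G ∈ Groups, ∀ L ∈ PG G, L.Nonempty) :
    oppPairs (fillGroups Blocks Groups e PG) =
      Groups.biUnion fun G => (oppPairs (PG G)).image (image (map (e G))) := by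
  ext s
  simp only [mem_oppPairs, mem_biUnion, mem_image]
  constructor
  · rintro ⟨L, M, rfl, h⟩
    obtain ⟨G, hG, L', M', h', rfl, rfl⟩ :=
      exists_isOppPair_of_isOppPair_fillGroups hD hk he hne h
    exact ⟨G, hG, {L', M'}, ⟨L', M', rfl, h'⟩, by simp⟩
  · rintro ⟨G, hG, -, ⟨L', M', rfl, h'⟩, rfl⟩
    exact ⟨L'.map (e G), M'.map (e G), by simp, isOppPair_fillGroups_map hD he hG h'⟩

theorem oppPairCount_fillGroups (hD : IsGDD k Groups Blocks) (hk : 2 ≤ k)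
    (he : ∀ G ∈ Groups, Set.range (e G) = G) (hne : ∀ G ∈ Groups, ∀ L ∈ PG G, L.Nonempty) :
    oppPairCount (fillGroups Blocks Groups e PG) = ∑ G ∈ Groups, oppPairCount (PG G) := by
  have hdisj : (Groups : Set (Finset V)).PairwiseDisjoint
      fun G => (oppPairs (PG G)).image (image (map (e G))) := by
    intro G₁ hG₁ G₂ hG₂ hne₁₂
    refine disjoint_left.2 fun s hs₁ hs₂ => hne₁₂ ?_
    obtain ⟨s₁, hs₁opp, rfl⟩ := mem_image.1 hs₁
    obtain ⟨L₁, M₁, rfl, h₁⟩ := mem_oppPairs.1 hs₁opp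
    obtain ⟨a, ha⟩ := hne G₁ hG₁ L₁ h₁.1
    obtain ⟨s₂, -, hs₂⟩ := mem_image.1 hs₂
    obtain ⟨L₂, -, hL₂⟩ := mem_image.1 (show L₁.map (e G₁) ∈ s₂.image (map (e G₂)) by
      rw [hs₂]
      exact mem_image_of_mem _ (mem_insert_self _ _))
    exact hD.eq_of_mem hG₁ hG₂ (apply_mem_of_range_eq he hG₁ a)
      (map_subset_of_range_eq he hG₂ L₂ (hL₂ ▸ mem_map_of_mem _ ha))
  simp_rw [oppPairCount_eq_card]
  rw [oppPairs_fillGroups hD hk he hne, card_biUnion hdisj]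
  exact sum_congr rfl fun G _ => card_image_of_injective _ (image_injective (map_injective _))

end Fill

/-- Wilson-style construction: from a k-GDD of type v₁^{u₁} ⋯ vₙ^{uₙ} with
vᵢ = (k-1)rᵢ + k + 1 and pentagonal geometries PENT(k, rᵢ) with exactly pᵢ opposite
line pairs, one obtains a PENT(k, R + (N-1)(k+1)/(k-1)) with exactly P opposite line
pairs, where N = Σ uᵢ, R = Σ uᵢ rᵢ, P = Σ uᵢ pᵢ. -/
theorem pent_gdd_construction (k n : ℕ) (hk : 2 ≤ k) (r u p v : Fin n → ℕ)
    (hv : ∀ i, v i = (k - 1) * r i + k + 1)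
    (hpent : ∀ i, ∃ Lines : Finset (Finset (Fin (v i))),
      IsPentGeom Lines k (r i) ∧ oppPairCount Lines = p i)
    (hgdd : ∃ Groups Blocks : Finset (Finset (Fin (∑ i, u i * v i))),
      IsGDD k Groups Blocks ∧
      Groups.val.map Finset.card = ∑ i, Multiset.replicate (u i) (v i))
    (hdvd : (k - 1) ∣ ((∑ i, u i) - 1) * (k + 1)) :
    ∃ Lines : Finset (Finset
        (Fin ((k - 1) * ((∑ i, u i * r i) + ((∑ i, u i) - 1) * (k + 1) / (k - 1)) + k + 1))),
      IsPentGeom Lines k ((∑ i, u i * r i) + ((∑ i, u i) - 1) * (k + 1) / (k - 1)) ∧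
      oppPairCount Lines = ∑ i, u i * p i := by
  obtain ⟨Groups, Blocks, hD, htype⟩ := hgdd
  have hpos : 0 < ∑ i, u i * v i := Fin.pos_iff_nonempty.2 (hD.nonempty (by omega))
  obtain ⟨i₀, -, -⟩ := exists_ne_zero_of_sum_ne_zero hpos.ne'
  have : Nonempty (Fin n) := ⟨i₀⟩
  obtain ⟨idx, hcard, hsum⟩ := exists_index_of_map_card_eq htype
  have hPG (G) (hG : G ∈ Groups) : ∃ Ls : Finset (Finset (Fin #G)),
      IsPentGeom Ls k (r (idx G)) ∧ oppPairCount Ls = p (idx G) := by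
    rw [hcard G hG]
    exact hpent (idx G)
  choose! PG hPG hp using hPG
  have hT := sub_one_mul_add_div_add_eq_sum_mul univ k r u v (fun i _ => hv i) hdvd hpos
  have he (G) (_ : G ∈ Groups) : Set.range (G.orderEmbOfFin rfl).toEmbedding = G :=
    G.range_orderEmbOfFin rfl
  have hne (G) (hG : G ∈ Groups) (L) (hL : L ∈ PG G) : L.Nonempty :=
    card_pos.1 (by rw [(hPG G hG).line_size L hL]; omega)
  rw [hT]
  refine ⟨fillGroups Blocks Groups (fun G => (G.orderEmbOfFin rfl).toEmbedding) PG,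
    isPentGeom_fillGroups hD hk he hPG (fun G hG => (hcard G hG).trans (hv _))
      (by rw [Fintype.card_fin, hT]), ?_⟩
  rw [oppPairCount_fillGroups hD hk he hne, sum_congr rfl hp, hsum]
end

section
/- Let g, u, q be positive integers with u ≤ q, let D be a set of non-negative integers such that for each d ∈ D there exists a 5-GDD of type g^u d^1, and suppose there exists a (u+1)-GDD of type q^{u+1} (a transversal design TD(u+1, q)). Then for every m that can be written as a sum of q elements of D (with repetition), there exists a 5-GDD of type (gq)^u m^1. -/
/-!
Wilson's fundamental construction. Give the `q` points of one group `G₀` of the TD(u+1, q)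
the weights `f 0, …, f (q-1)`, every other point the weight `g`, and inflate each point `x`
into `w x` points. A block of the TD meets `G₀` in exactly one point `x`, so its inflation
carries a 5-GDD of type `g^u (w x)^1` whose groups are the fibres over the points of the
block. The union of these is a 5-GDD whose groups are the inflated groups of the TD: `u` of
size `g q` and one of size `∑ i, f i = m`.
-/

open Finset

namespace IsGDD

variable {V W : Type} [DecidableEq V] [DecidableEq W] {k : ℕ} {Gs Bs : Finset (Finset V)}

noncomputable def groupOf (h : IsGDD k Gs Bs) (x : V) : Finset V :=
  (h.partition x).exists.choose

lemma groupOf_mem (h : IsGDD k Gs Bs) (x : V) : h.groupOf x ∈ Gs :=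
  (h.partition x).exists.choose_spec.1

lemma mem_groupOf (h : IsGDD k Gs Bs) (x : V) : x ∈ h.groupOf x :=
  (h.partition x).exists.choose_spec.2

lemma groupOf_eq (h : IsGDD k Gs Bs) {G : Finset V} {x : V} (hG : G ∈ Gs) (hx : x ∈ G) :
    h.groupOf x = G :=
  (h.partition x).unique ⟨h.groupOf_mem x, h.mem_groupOf x⟩ ⟨hG, hx⟩

lemma eq_of_mem_of_mem (h : IsGDD k Gs Bs) {G H : Finset V} (hG : G ∈ Gs) (hH : H ∈ Gs)
    {x : V} (hxG : x ∈ G) (hxH : x ∈ H) : G = H :=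
  (h.groupOf_eq hG hxG).symm.trans (h.groupOf_eq hH hxH)

lemma notMem_of_mem_of_ne (hT : IsGDD k Gs Bs) {G G₀ : Finset V} (hG : G ∈ Gs)
    (hG₀ : G₀ ∈ Gs) (hne : G ≠ G₀) {x : V} (hx : x ∈ G) : x ∉ G₀ :=
  fun hx₀ => hne (hT.eq_of_mem_of_mem hG hG₀ hx hx₀)

lemma eq_of_groupOf_eq (h : IsGDD k Gs Bs) {B : Finset V} (hB : B ∈ Bs) {x y : V}
    (hx : x ∈ B) (hy : y ∈ B) (hxy : h.groupOf x = h.groupOf y) : x = y := by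
  by_contra hne
  exact h.within_pair x y hne _ (h.groupOf_mem x) (h.mem_groupOf x)
    (hxy ▸ h.mem_groupOf y) B hB ⟨hx, hy⟩

lemma existsUnique_mem_block_inter (h : IsGDD k Gs Bs) (hcard : Gs.card = k) {B G : Finset V}
    (hB : B ∈ Bs) (hG : G ∈ Gs) : ∃! x, x ∈ B ∧ x ∈ G := by
  obtain ⟨x, hx, hxG⟩ := surj_on_of_inj_on_of_card_le (fun x _ => h.groupOf x)
    (fun x _ => h.groupOf_mem x) (fun _ _ hx hy => h.eq_of_groupOf_eq hB hx hy)
    (by rw [hcard, h.block_size B hB]) G hG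
  refine ⟨x, ⟨hx, hxG ▸ h.mem_groupOf x⟩, fun y ⟨hy, hyG⟩ => ?_⟩
  exact h.eq_of_groupOf_eq hB hy hx (by rw [h.groupOf_eq hG hyG, hxG])

lemma card_eq_sum [Fintype V] (h : IsGDD k Gs Bs) :
    Fintype.card V = (Gs.val.map Finset.card).sum := by
  rw [← card_univ, card_eq_sum_card_fiberwise (f := h.groupOf) (t := Gs)
    (fun x _ => h.groupOf_mem x), Finset.sum]
  refine congrArg _ (Multiset.map_congr rfl fun G hG => congrArg card ?_)
  ext x
  simpa using ⟨fun hx => hx ▸ h.mem_groupOf x, h.groupOf_eq hG⟩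

lemma map_equiv (h : IsGDD k Gs Bs) (e : V ≃ W) :
    IsGDD k (Gs.map e.finsetCongr.toEmbedding) (Bs.map e.finsetCongr.toEmbedding) := by
  obtain ⟨hpart, hne, hsize, hcross, hwithin⟩ := h
  refine ⟨?_, hne.map, ?_, ?_, ?_⟩ <;>
    simp only [← e.forall_congr_right, ← e.finsetCongr.forall_congr_right,
      ← e.finsetCongr.existsUnique_congr_right, mem_map_equiv, Equiv.symm_apply_apply,
      Equiv.finsetCongr_apply, Equiv.finsetCongr_symm, map_map,
      Function.Embedding.equiv_toEmbedding_trans_symm_toEmbedding, map_refl, card_map, ne_eq,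
      EmbeddingLike.apply_eq_iff_eq] <;>
    assumption

lemma exists_fin [Fintype V] (h : IsGDD k Gs Bs) {n : ℕ} (hn : Fintype.card V = n) :
    ∃ Gs' Bs' : Finset (Finset (Fin n)), IsGDD k Gs' Bs' ∧
      Gs'.val.map card = Gs.val.map card := by
  refine ⟨_, _, h.map_equiv (Fintype.equivFinOfCardEq hn), ?_⟩
  simp [Function.comp_def]

end IsGDD

lemma Finset.card_fiber_eq_count {α γ : Type*} [DecidableEq γ] (s : Finset α) (f : α → γ)
    (c : γ) : Fintype.card {a : s // f a = c} = (s.val.map f).count c := by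
  simp_rw [Multiset.count_map, Fintype.card_subtype, eq_comm (a := c), ← Finset.filter_val,
    ← Finset.card_def]
  exact card_bij (fun a _ => a.1) (by simp) (by simp) (by simp +contextual)

lemma Finset.exists_equiv_of_map_val_eq {α β γ : Type*} [DecidableEq γ] {s : Finset α}
    {t : Finset β} {f : α → γ} {h : β → γ} (hst : s.val.map f = t.val.map h) :
    ∃ e : s ≃ t, ∀ a, h (e a) = f a := by
  have hcard (c : γ) :
      Fintype.card {a : s // f a = c} = Fintype.card {b : t // h b = c} := by
    rw [card_fiber_eq_count, card_fiber_eq_count, hst]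
  exact ⟨.ofFiberEquiv fun c => Fintype.equivOfCardEq (hcard c),
    Equiv.ofFiberEquiv_map (g := fun b : t => h b) _⟩

lemma Finset.map_val_eq_cons_replicate {α β : Type*} [DecidableEq α] {s : Finset α} {a : α}
    (ha : a ∈ s) {f : α → β} {c : β} (hc : ∀ x ∈ s, x ≠ a → f x = c) :
    s.val.map f = f a ::ₘ Multiset.replicate (s.card - 1) c := by
  rw [← Multiset.cons_erase (show a ∈ s.val from ha), Multiset.map_cons]
  refine congrArg _ (Multiset.eq_replicate.2 ⟨?_, ?_⟩)
  · rw [Multiset.card_map, Multiset.card_erase_of_mem ha]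
    rfl
  · simp only [Multiset.mem_map, s.nodup.mem_erase_iff, mem_val, forall_exists_index, and_imp]
    exact fun _ x hxa hx hfx => hfx ▸ hc x hx hxa

section Inflation

variable {V : Type} {k : ℕ}

def inflate (w : V → ℕ) (G : Finset V) : Finset (Σ x, Fin (w x)) :=
  G.sigma fun _ => univ

@[simp]
lemma mem_inflate {w : V → ℕ} {G : Finset V} {p : Σ x, Fin (w x)} :
    p ∈ inflate w G ↔ p.1 ∈ G := by
  simp [inflate]

lemma card_inflate (w : V → ℕ) (G : Finset V) : (inflate w G).card = ∑ x ∈ G, w x := by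
  simp [inflate]

/-- `Blocks` are the blocks of a `k`-GDD on `inflate w B` whose groups are the fibres
`{x} × Fin (w x)`, `x ∈ B`. -/
structure IsFibreGDD (k : ℕ) (w : V → ℕ) (B : Finset V)
    (Blocks : Finset (Finset (Σ x, Fin (w x)))) : Prop where
  blocks_nonempty : Blocks.Nonempty
  block_size : ∀ C ∈ Blocks, C.card = k
  fst_mem : ∀ C ∈ Blocks, ∀ p ∈ C, p.1 ∈ B
  cross_pair : ∀ p p' : Σ x, Fin (w x), p.1 ∈ B → p'.1 ∈ B → p.1 ≠ p'.1 →
    ∃! C, C ∈ Blocks ∧ p ∈ C ∧ p' ∈ C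
  within_pair : ∀ p p' : Σ x, Fin (w x), p ≠ p' → p.1 = p'.1 →
    ∀ C ∈ Blocks, ¬ (p ∈ C ∧ p' ∈ C)

namespace IsGDD

variable {α : Type} [DecidableEq α] {S T : Finset (Finset α)} {w : V → ℕ} {B : Finset V}

lemma isFibreGDD_map (hI : IsGDD k S T) (χ : α ↪ Σ x, Fin (w x)) (hχB : ∀ a, (χ a).1 ∈ B)
    (hχ_surj : ∀ p : Σ x, Fin (w x), p.1 ∈ B → ∃ a, χ a = p)
    (hχ_fst : ∀ a a', (χ a).1 = (χ a').1 ↔ hI.groupOf a = hI.groupOf a') :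
    IsFibreGDD k w B (T.map (mapEmbedding χ).toEmbedding) := by
  refine ⟨hI.blocks_nonempty.map, ?_, ?_, ?_, ?_⟩
  · simpa using hI.block_size
  · simpa using fun _ _ a _ => hχB a
  · intro p p' hp hp' hne
    obtain ⟨a, rfl⟩ := hχ_surj p hp
    obtain ⟨a', rfl⟩ := hχ_surj p' hp'
    have hgroup : ∀ G ∈ S, ¬ (a ∈ G ∧ a' ∈ G) := fun G hG ⟨ha, ha'⟩ =>
      hne ((hχ_fst a a').2 (by rw [hI.groupOf_eq hG ha, hI.groupOf_eq hG ha']))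
    obtain ⟨C, ⟨hC, haC, ha'C⟩, huniq⟩ :=
      hI.cross_pair a a' (fun h => hne (h ▸ rfl)) hgroup
    refine ⟨C.map χ,
      ⟨mem_map_of_mem _ hC, mem_map_of_mem _ haC, mem_map_of_mem _ ha'C⟩, ?_⟩
    rintro _ ⟨hC', haC', ha'C'⟩
    obtain ⟨C', hC'T, rfl⟩ := mem_map.1 hC'
    simp only [RelEmbedding.coe_toEmbedding, mapEmbedding_apply, mem_map'] at haC' ha'C'
    exact congrArg _ (huniq C' ⟨hC'T, haC', ha'C'⟩)
  · rintro p p' hne hfst _ hC ⟨hp, hp'⟩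
    obtain ⟨C, hCT, rfl⟩ := mem_map.1 hC
    obtain ⟨a, ha, rfl⟩ := mem_map.1 hp
    obtain ⟨a', ha', rfl⟩ := mem_map.1 hp'
    exact hI.within_pair a a' (fun h => hne (h ▸ rfl)) _ (hI.groupOf_mem a) (hI.mem_groupOf a)
      ((hχ_fst a a').1 hfst ▸ hI.mem_groupOf a') C hCT ⟨ha, ha'⟩

lemma exists_embedding_sigma [Fintype α] (hI : IsGDD k S T)
    (hST : S.val.map card = B.val.map w) :
    ∃ χ : α ↪ Σ x, Fin (w x), (∀ a, (χ a).1 ∈ B) ∧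
      (∀ p : Σ x, Fin (w x), p.1 ∈ B → ∃ a, χ a = p) ∧
      ∀ a a', (χ a).1 = (χ a').1 ↔ hI.groupOf a = hI.groupOf a' := by
  obtain ⟨e, he⟩ := exists_equiv_of_map_val_eq hST
  let group (a : α) : S := ⟨hI.groupOf a, hI.groupOf_mem a⟩
  have hfibre (G : S) : Fintype.card {a // group a = G} = w (e G) := by
    rw [he, ← Fintype.card_coe]
    refine Fintype.card_congr (Equiv.subtypeEquivRight fun a => ?_)
    exact ⟨fun h => h ▸ hI.mem_groupOf a, fun h => Subtype.ext (hI.groupOf_eq G.2 h)⟩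
  let Φ : α ≃ Σ x : B, Fin (w x) := (Equiv.sigmaFiberEquiv group).symm.trans
    (Equiv.sigmaCongr e fun G => Fintype.equivFinOfCardEq (hfibre G))
  refine ⟨Φ.toEmbedding.trans (.sigmaMap (.subtype _) fun _ => .refl _), fun a => (Φ a).1.2,
    fun p hp => ⟨Φ.symm ⟨⟨p.1, hp⟩, p.2⟩, ?_⟩, fun a a' => ?_⟩
  · simp only [Function.Embedding.trans_apply, Function.Embedding.coeFn_mk,
      Equiv.apply_symm_apply]
    rfl
  · change (e (group a) : V) = e (group a') ↔ _
    rw [Subtype.coe_inj, e.apply_eq_iff_eq, Subtype.mk.injEq]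

lemma exists_isFibreGDD [Fintype α] (hI : IsGDD k S T) (hST : S.val.map card = B.val.map w) :
    ∃ Blocks, IsFibreGDD k w B Blocks :=
  have ⟨χ, hχB, hχ_surj, hχ_fst⟩ := hI.exists_embedding_sigma hST
  ⟨_, hI.isFibreGDD_map χ hχB hχ_surj hχ_fst⟩

section

variable [DecidableEq V] {K : ℕ} {Gs Bs : Finset (Finset V)} {G₀ : Finset V}

theorem inflate_biUnion (hT : IsGDD K Gs Bs)
    {LB : Finset V → Finset (Finset (Σ x, Fin (w x)))}
    (hLB : ∀ B ∈ Bs, IsFibreGDD k w B (LB B)) :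
    IsGDD k (Gs.image (inflate w)) (Bs.biUnion LB) := by
  refine ⟨fun p => ?_, ?_, ?_, fun p p' hne hgroup => ?_, ?_⟩
  · obtain ⟨G, ⟨hG, hpG⟩, huniq⟩ := hT.partition p.1
    refine ⟨inflate w G, ⟨mem_image_of_mem _ hG, mem_inflate.2 hpG⟩, ?_⟩
    rintro _ ⟨hH', hpH⟩
    obtain ⟨H, hH, rfl⟩ := mem_image.1 hH'
    exact congrArg _ (huniq H ⟨hH, mem_inflate.1 hpH⟩)
  · obtain ⟨B, hB⟩ := hT.blocks_nonempty
    obtain ⟨C, hC⟩ := (hLB B hB).blocks_nonempty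
    exact ⟨C, mem_biUnion.2 ⟨B, hB, hC⟩⟩
  · simp only [mem_biUnion, forall_exists_index, and_imp]
    exact fun C B hB hC => (hLB B hB).block_size C hC
  · have hgroup' : ∀ G ∈ Gs, ¬ (p.1 ∈ G ∧ p'.1 ∈ G) := fun G hG hpp' =>
      hgroup _ (mem_image_of_mem _ hG) (by simpa using hpp')
    have hfst : p.1 ≠ p'.1 := fun h =>
      hgroup' _ (hT.groupOf_mem p.1) ⟨hT.mem_groupOf p.1, h ▸ hT.mem_groupOf p.1⟩
    obtain ⟨B, ⟨hB, hpB, hp'B⟩, hBuniq⟩ := hT.cross_pair p.1 p'.1 hfst hgroup'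
    obtain ⟨C, ⟨hC, hpC, hp'C⟩, hCuniq⟩ := (hLB B hB).cross_pair p p' hpB hp'B hfst
    refine ⟨C, ⟨mem_biUnion.2 ⟨B, hB, hC⟩, hpC, hp'C⟩, ?_⟩
    rintro C' ⟨hC', hpC', hp'C'⟩
    obtain ⟨B', hB', hC'B'⟩ := mem_biUnion.1 hC'
    obtain rfl : B' = B := hBuniq B' ⟨hB', (hLB B' hB').fst_mem C' hC'B' p hpC',
      (hLB B' hB').fst_mem C' hC'B' p' hp'C'⟩
    exact hCuniq C' ⟨hC'B', hpC', hp'C'⟩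
  · rintro p p' hne _ hG' hpG hp'G C hC ⟨hpC, hp'C⟩
    obtain ⟨G, hG, rfl⟩ := mem_image.1 hG'
    obtain ⟨B, hB, hCB⟩ := mem_biUnion.1 hC
    by_cases hfst : p.1 = p'.1
    · exact (hLB B hB).within_pair p p' hne hfst C hCB ⟨hpC, hp'C⟩
    · exact hT.within_pair p.1 p'.1 hfst G hG (mem_inflate.1 hpG) (mem_inflate.1 hp'G) B hB
        ⟨(hLB B hB).fst_mem C hCB p hpC, (hLB B hB).fst_mem C hCB p' hp'C⟩

theorem exists_inflate (hT : IsGDD K Gs Bs) (w : V → ℕ)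
    (hingredient : ∀ B ∈ Bs, ∃ (n : ℕ) (S T : Finset (Finset (Fin n))),
      IsGDD k S T ∧ S.val.map card = B.val.map w) :
    ∃ Blocks, IsGDD k (Gs.image (inflate w)) Blocks := by
  have hfill (B : Finset V) (hB : B ∈ Bs) : ∃ Blocks, IsFibreGDD k w B Blocks :=
    have ⟨_, _, _, hI, hST⟩ := hingredient B hB
    hI.exists_isFibreGDD hST
  choose! LB hLB using hfill
  exact ⟨_, hT.inflate_biUnion hLB⟩

lemma injOn_inflate (hT : IsGDD k Gs Bs)
    (hpos : ∀ G ∈ Gs, G ≠ G₀ → ∃ x ∈ G, 0 < w x) : Set.InjOn (inflate w) Gs := by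
  suffices ∀ G ∈ Gs, ∀ H ∈ Gs, H ≠ G₀ → inflate w G = inflate w H → G = H by
    intro G hG H hH heq
    by_cases hH₀ : H = G₀
    · by_cases hG₀ : G = G₀
      · rw [hG₀, hH₀]
      · exact (this H hH G hG hG₀ heq.symm).symm
    · exact this G hG H hH hH₀ heq
  intro G hG H hH hH₀ heq
  obtain ⟨x, hx, hwx⟩ := hpos H hH hH₀
  have hxG : (⟨x, ⟨0, hwx⟩⟩ : Σ x, Fin (w x)) ∈ inflate w G := heq ▸ mem_inflate.2 hx
  exact hT.eq_of_mem_of_mem hG hH (mem_inflate.1 hxG) hx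

lemma map_card_image_inflate (hT : IsGDD k Gs Bs)
    (hpos : ∀ G ∈ Gs, G ≠ G₀ → ∃ x ∈ G, 0 < w x) :
    (Gs.image (inflate w)).val.map card = Gs.val.map fun G => ∑ x ∈ G, w x := by
  rw [image_val_of_injOn (hT.injOn_inflate hpos), Multiset.map_map]
  exact Multiset.map_congr rfl fun G _ => card_inflate w G

end

end IsGDD

end Inflation

namespace IsGDD

variable {V : Type} [DecidableEq V] {k : ℕ} {Gs Bs : Finset (Finset V)} {w : V → ℕ}
  {G₀ : Finset V} {g : ℕ}

lemma exists_map_val_block_eq_cons {u : ℕ} (hT : IsGDD (u + 1) Gs Bs)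
    (hcard : Gs.card = u + 1) (hG₀ : G₀ ∈ Gs) (hw : ∀ x ∉ G₀, w x = g) {B : Finset V}
    (hB : B ∈ Bs) :
    ∃ x ∈ G₀, B.val.map w = w x ::ₘ Multiset.replicate u g := by
  obtain ⟨x, ⟨hxB, hxG₀⟩, huniq⟩ := hT.existsUnique_mem_block_inter hcard hB hG₀
  refine ⟨x, hxG₀, ?_⟩
  rw [map_val_eq_cons_replicate hxB fun y hy hyx => hw y fun hy₀ => hyx (huniq y ⟨hy, hy₀⟩),
    hT.block_size B hB, Nat.add_sub_cancel]

lemma map_val_sum_eq_cons {u q : ℕ} (hT : IsGDD k Gs Bs)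
    (hGs : Gs.val.map card = Multiset.replicate (u + 1) q) (hG₀ : G₀ ∈ Gs)
    (hw : ∀ x ∉ G₀, w x = g) :
    Gs.val.map (fun G => ∑ x ∈ G, w x) =
      (∑ x ∈ G₀, w x) ::ₘ Multiset.replicate u (g * q) := by
  have hcard : Gs.card = u + 1 := by simpa using congrArg Multiset.card hGs
  refine (map_val_eq_cons_replicate (c := g * q) hG₀ fun G hG hne => ?_).trans
    (by rw [hcard]; rfl)
  have hGq : G.card = q :=
    Multiset.eq_of_mem_replicate (hGs ▸ Multiset.mem_map_of_mem card hG)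
  rw [sum_eq_card_nsmul fun x hx => hw x (hT.notMem_of_mem_of_ne hG hG₀ hne hx), hGq,
    smul_eq_mul, mul_comm]

end IsGDD

lemma exists_weight_of_card_eq {V : Type} [DecidableEq V] {s : Finset V} {q : ℕ}
    (hs : s.card = q) (f : Fin q → ℕ) (g : ℕ) :
    ∃ w : V → ℕ, (∀ x ∉ s, w x = g) ∧ (∀ x ∈ s, w x ∈ Set.range f) ∧
      ∑ x ∈ s, w x = ∑ i, f i := by
  let e : s ≃ Fin q := s.equivFinOfCardEq hs
  refine ⟨fun x => if hx : x ∈ s then f (e ⟨x, hx⟩) else g, fun x hx => dif_neg hx,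
    fun x hx => ⟨e ⟨x, hx⟩, by simp [hx]⟩, ?_⟩
  rw [← sum_coe_sort, ← e.sum_comp]
  exact sum_congr rfl fun x _ => dif_pos x.2

theorem gdd_td_construction_general (g u q : ℕ) (hg : 0 < g) (hq : 0 < q) (D : Set ℕ)
    (hD : ∀ d ∈ D, ∃ Groups Blocks : Finset (Finset (Fin (g * u + d))),
      IsGDD 5 Groups Blocks ∧
      Groups.val.map Finset.card = d ::ₘ Multiset.replicate u g)
    (hTD : ∃ Groups Blocks : Finset (Finset (Fin (q * (u + 1)))),
      IsGDD (u + 1) Groups Blocks ∧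
      Groups.val.map Finset.card = Multiset.replicate (u + 1) q) :
    ∀ m : ℕ, (∃ f : Fin q → ℕ, (∀ i, f i ∈ D) ∧ ∑ i, f i = m) →
      ∃ Groups Blocks : Finset (Finset (Fin (g * q * u + m))),
        IsGDD 5 Groups Blocks ∧
        Groups.val.map Finset.card = m ::ₘ Multiset.replicate u (g * q) := by
  classical
  rintro m ⟨f, hfD, rfl⟩
  obtain ⟨Gs, Bs, hT, hGs⟩ := hTD
  have hGs_card : Gs.card = u + 1 := by simpa using congrArg Multiset.card hGs
  have hG_card (G : Finset _) (hG : G ∈ Gs) : G.card = q :=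
    Multiset.eq_of_mem_replicate (hGs ▸ Multiset.mem_map_of_mem card hG)
  obtain ⟨G₀, hG₀⟩ : Gs.Nonempty := card_pos.1 (by omega)
  obtain ⟨w, hw_out, hw_in, hw_sum⟩ := exists_weight_of_card_eq (hG_card G₀ hG₀) f g
  obtain ⟨Blocks, hGDD⟩ := hT.exists_inflate w fun B hB => by
    obtain ⟨x, hx, hBw⟩ := hT.exists_map_val_block_eq_cons hGs_card hG₀ hw_out hB
    obtain ⟨i, hi⟩ := hw_in x hx
    rw [hBw, ← hi]
    exact ⟨_, hD _ (hfD i)⟩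
  have hpos (G : Finset _) (hG : G ∈ Gs) (hne : G ≠ G₀) : ∃ x ∈ G, 0 < w x := by
    obtain ⟨x, hx⟩ := card_pos.1 (hG_card G hG ▸ hq)
    exact ⟨x, hx, hw_out x (hT.notMem_of_mem_of_ne hG hG₀ hne hx) ▸ hg⟩
  have htype : (Gs.image (inflate w)).val.map card =
      (∑ i, f i) ::ₘ Multiset.replicate u (g * q) := by
    rw [hT.map_card_image_inflate hpos, hT.map_val_sum_eq_cons hGs hG₀ hw_out, hw_sum]
  obtain ⟨Gs', Bs', hGDD', hGs'⟩ := hGDD.exists_fin (n := g * q * u + ∑ i, f i)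
    (by rw [hGDD.card_eq_sum, htype]; simp [add_comm, mul_comm])
  exact ⟨Gs', Bs', hGDD', hGs'.trans htype⟩

/-- Wilson's fundamental construction specialised: given 5-GDDs of type g^u d^1 for all
d ∈ D and a transversal design TD(u+1, q) (a (u+1)-GDD of type q^{u+1}), for every m
expressible as a sum of q elements of D there is a 5-GDD of type (gq)^u m^1. -/
theorem gdd_td_construction (g u q : ℕ) (hg : 0 < g) (hu : 0 < u) (hq : 0 < q)
    (huq : u ≤ q) (D : Set ℕ)
    (hD : ∀ d ∈ D, ∃ Groups Blocks : Finset (Finset (Fin (g * u + d))),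
      IsGDD 5 Groups Blocks ∧
      Groups.val.map Finset.card = d ::ₘ Multiset.replicate u g)
    (hTD : ∃ Groups Blocks : Finset (Finset (Fin (q * (u + 1)))),
      IsGDD (u + 1) Groups Blocks ∧
      Groups.val.map Finset.card = Multiset.replicate (u + 1) q) :
    ∀ m : ℕ, (∃ f : Fin q → ℕ, (∀ i, f i ∈ D) ∧ ∑ i, f i = m) →
      ∃ Groups Blocks : Finset (Finset (Fin (g * q * u + m))),
        IsGDD 5 Groups Blocks ∧
        Groups.val.map Finset.card = m ::ₘ Multiset.replicate u (g * q) :=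
  gdd_td_construction_general g u q hg hq D hD hTD
end

section
/- Removing a point x together with its opposite line x^opp (and deleting x from all lines through it) from a pentagonal geometry PENT(k, k) with k > 2 yields a pentagonal geometry PENT(k−1, k). -/
/-!
A line `M` avoiding `x` must meet `x^opp`. Otherwise count collinear pairs `(y, z)` with
`y ∈ x^opp`, `z ∈ M`: each `y` is collinear with at least `k - 1` points of `M`, since `y^opp`
passes through `x` and so meets `M` at most once; each `z` is collinear with at most `r - 2`
points of `x^opp`, since of the `r` lines through `z` neither `M` nor the line `zx` meets `x^opp`.
For `r ≤ k` this is impossible. Hence every line other than `x^opp` loses exactly one point,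
and for a surviving point `p` the line `p^opp` is not `x^opp` (a line through `p` but not `x`
meets `x^opp` in a point collinear with `p`). Truncated lines keep `k - 1 ≥ 2` points, so they
still determine the original lines, and degrees, partial linearity and opposite lines carry over.
-/

open Finset

variable {P : Type} [DecidableEq P] {Lines : Finset (Finset P)} {k r : ℕ}

instance (Lines : Finset (Finset P)) : DecidableRel (Collin Lines) :=
  fun _ _ => inferInstanceAs (Decidable (_ ∨ _))

theorem Collin.symm {x y : P} (h : Collin Lines x y) : Collin Lines y x := by
  rcases h with rfl | ⟨M, hM, hx, hy⟩
  exacts [Or.inl rfl, Or.inr ⟨M, hM, hy, hx⟩]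

theorem Collin.of_mem {M : Finset P} (hM : M ∈ Lines) {x y : P} (hx : x ∈ M) (hy : y ∈ M) :
    Collin Lines x y :=
  Or.inr ⟨M, hM, hx, hy⟩

theorem collin_image_subtype {p : P → Prop} [DecidablePred p] {Ls : Finset (Finset P)}
    {a b : Subtype p} :
    Collin (Ls.image (·.subtype p)) a b ↔ Collin Ls a b := by
  simp only [Collin, Subtype.ext_iff, mem_image, exists_exists_and_eq_and, mem_subtype]

theorem collin_iff_of_subset {Lines' : Finset (Finset P)} (hsub : Lines' ⊆ Lines) {a b : P}
    (ha : ∀ M ∈ Lines, a ∈ M → M ∈ Lines') :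
    Collin Lines' a b ↔ Collin Lines a b := by
  refine or_congr_right ⟨fun ⟨M, hM, hab⟩ => ⟨M, hsub hM, hab⟩, fun ⟨M, hM, hab⟩ => ?_⟩
  exact ⟨M, ha M hM hab.1, hab⟩

def IsOppLine (Lines : Finset (Finset P)) (x : P) (L : Finset P) : Prop :=
  ∀ y : P, y ∈ L ↔ ¬ Collin Lines x y

namespace IsOppLine

variable {x : P} {L : Finset P}

theorem disjoint_of_mem (hopp : IsOppLine Lines x L) {M : Finset P} (hM : M ∈ Lines)
    (hxM : x ∈ M) : Disjoint M L :=
  disjoint_left.2 fun _ hyM hyL => (hopp _).1 hyL (.of_mem hM hxM hyM)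

theorem exists_line_of_notMem (hopp : IsOppLine Lines x L) {y : P} (hyL : y ∉ L)
    (hxy : x ≠ y) : ∃ G ∈ Lines, x ∈ G ∧ y ∈ G :=
  (not_not.1 (mt (hopp y).2 hyL)).resolve_left hxy

end IsOppLine

namespace IsPentGeom

theorem card_inter_le_one (h : IsPentGeom Lines k r) {M N : Finset P} (hM : M ∈ Lines)
    (hN : N ∈ Lines) (hMN : M ≠ N) : #(M ∩ N) ≤ 1 :=
  card_le_one.2 fun a ha b hb => by_contra fun hab => hMN <|
    h.plinear a b hab M hM (mem_inter.1 ha).1 (mem_inter.1 hb).1 N hN (mem_inter.1 ha).2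
      (mem_inter.1 hb).2

theorem le_card_filter_collin (h : IsPentGeom Lines k r) {y : P} {M N : Finset P}
    (hM : M ∈ Lines) (hN : N ∈ Lines) (hopp : IsOppLine Lines y N) (hMN : M ≠ N) :
    k - 1 ≤ #(M.filter (Collin Lines y ·)) := by
  have hfilter : M.filter (Collin Lines y ·) = M \ N := by
    ext z
    simp [hopp z]
  rw [hfilter, card_sdiff, h.line_size M hM]
  have := h.card_inter_le_one hN hM hMN.symm
  omega

theorem card_filter_collin_le (h : IsPentGeom Lines k r) {z : P} {L M G : Finset P}
    (hL : L ∈ Lines) (hM : M ∈ Lines) (hG : G ∈ Lines) (hzL : z ∉ L) (hzM : z ∈ M) (hzG : z ∈ G)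
    (hMG : M ≠ G) (hML : Disjoint M L) (hGL : Disjoint G L) :
    #(L.filter (Collin Lines · z)) ≤ r - 2 := by
  set S := ((Lines.filter (z ∈ ·)).erase M).erase G
  have hS : #S = r - 2 := by
    rw [card_erase_of_mem (mem_erase.2 ⟨hMG.symm, mem_filter.2 ⟨hG, hzG⟩⟩),
      card_erase_of_mem (mem_filter.2 ⟨hM, hzM⟩), h.point_deg z, Nat.sub_sub]
  have hcover : L.filter (Collin Lines · z) ⊆ S.biUnion (· ∩ L) := by
    intro y hy
    obtain ⟨hyL, hyz⟩ := mem_filter.1 hy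
    obtain ⟨H, hH, hyH, hzH⟩ := hyz.resolve_left (ne_of_mem_of_not_mem hyL hzL)
    refine mem_biUnion.2 ⟨H, ?_, mem_inter.2 ⟨hyH, hyL⟩⟩
    refine mem_erase.2 ⟨?_, mem_erase.2 ⟨?_, mem_filter.2 ⟨hH, hzH⟩⟩⟩
    · rintro rfl; exact disjoint_left.1 hGL hyH hyL
    · rintro rfl; exact disjoint_left.1 hML hyH hyL
  calc #(L.filter (Collin Lines · z)) ≤ #(S.biUnion (· ∩ L)) := card_le_card hcover
    _ ≤ #S * 1 := card_biUnion_le_card_mul _ _ _ fun H hH => by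
        obtain ⟨hH, hzH⟩ := mem_filter.1 (mem_of_mem_erase (mem_of_mem_erase hH))
        exact h.card_inter_le_one hH hL (ne_of_mem_of_not_mem' hzH hzL)
    _ = r - 2 := by rw [hS, mul_one]

theorem inter_nonempty_of_isOppLine (h : IsPentGeom Lines k r) (hr : 2 ≤ r) (hrk : r ≤ k)
    {x : P} {L M : Finset P} (hL : L ∈ Lines) (hopp : IsOppLine Lines x L) (hM : M ∈ Lines)
    (hxM : x ∉ M) : (M ∩ L).Nonempty := by
  by_contra hdisj
  rw [not_nonempty_iff_eq_empty, ← disjoint_iff_inter_eq_empty] at hdisj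
  have many : ∀ y ∈ L, k - 1 ≤ #(M.bipartiteAbove (Collin Lines) y) := by
    intro y hy
    obtain ⟨N, hN, hNopp⟩ := h.opp y
    have hxN : x ∈ N := (hNopp x).2 fun hyx => (hopp y).1 hy hyx.symm
    exact h.le_card_filter_collin hM hN hNopp (ne_of_mem_of_not_mem' hxN hxM).symm
  have few : ∀ z ∈ M, #(L.bipartiteBelow (Collin Lines) z) ≤ r - 2 := by
    intro z hz
    have hzL := disjoint_left.1 hdisj hz
    obtain ⟨G, hG, hxG, hzG⟩ := hopp.exists_line_of_notMem hzL (ne_of_mem_of_not_mem hz hxM).symm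
    exact h.card_filter_collin_le hL hM hG hzL hz hzG (ne_of_mem_of_not_mem' hxG hxM).symm hdisj
      (hopp.disjoint_of_mem hG hxG)
  have hcount := card_mul_le_card_mul (Collin Lines) many few
  rw [h.line_size L hL, h.line_size M hM] at hcount
  have := Nat.le_of_mul_le_mul_left hcount (by omega)
  omega

theorem card_inter_insert_of_isOppLine (h : IsPentGeom Lines k r) (hr : 2 ≤ r) (hrk : r ≤ k)
    {x : P} {L M : Finset P} (hL : L ∈ Lines) (hopp : IsOppLine Lines x L) (hM : M ∈ Lines)
    (hML : M ≠ L) : #(M ∩ insert x L) = 1 := by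
  by_cases hxM : x ∈ M
  · rw [inter_insert_of_mem hxM, disjoint_iff_inter_eq_empty.1 (hopp.disjoint_of_mem hM hxM),
      insert_empty, card_singleton]
  · rw [inter_insert_of_notMem hxM]
    exact le_antisymm (h.card_inter_le_one hM hL hML)
      (card_pos.2 (h.inter_nonempty_of_isOppLine hr hrk hL hopp hM hxM))

theorem isOppLine_ne_of_notMem (h : IsPentGeom Lines k r) (hr : 2 ≤ r) (hrk : r ≤ k) {x p : P}
    {L N : Finset P} (hL : L ∈ Lines) (hopp : IsOppLine Lines x L) (hpx : p ≠ x) (hpL : p ∉ L)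
    (hpN : IsOppLine Lines p N) : N ≠ L := by
  rintro rfl
  obtain ⟨G, hG, hxG, hpG⟩ := hopp.exists_line_of_notMem hpL hpx.symm
  obtain ⟨H, hH, hHG⟩ := exists_mem_ne (s := Lines.filter (p ∈ ·))
    (by rw [h.point_deg p]; omega) G
  obtain ⟨hH, hpH⟩ := mem_filter.1 hH
  have hxH : x ∉ H := fun hxH => hHG (h.plinear p x hpx H hH hpH hxH G hG hpG hxG)
  obtain ⟨y, hy⟩ := h.inter_nonempty_of_isOppLine hr hrk hL hopp hH hxH
  exact (hpN y).1 (mem_inter.1 hy).2 (.of_mem hH hpH (mem_inter.1 hy).1)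

theorem eq_of_subtype_eq (h : IsPentGeom Lines k r) {p : P → Prop} [DecidablePred p]
    {M N : Finset P} (hM : M ∈ Lines) (hN : N ∈ Lines) (hcard : 1 < #(M.subtype p))
    (hMN : M.subtype p = N.subtype p) : M = N := by
  obtain ⟨a, ha, b, hb, hab⟩ := one_lt_card.1 hcard
  have haN := hMN ▸ ha
  have hbN := hMN ▸ hb
  rw [mem_subtype] at ha hb haN hbN
  exact h.plinear a b (Subtype.coe_ne_coe.2 hab) M hM ha hb N hN haN hbN

theorem restrict (h : IsPentGeom Lines k r) (hk : 3 ≤ k) {S : Finset P}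
    {Lines' : Finset (Finset P)} (hsub : Lines' ⊆ Lines)
    (hmem : ∀ M ∈ Lines, ∀ p ∉ S, p ∈ M → M ∈ Lines')
    (hopp : ∀ p ∉ S, ∃ N ∈ Lines', IsOppLine Lines p N) (hmeet : ∀ M ∈ Lines', #(M ∩ S) = 1) :
    IsPentGeom (Lines'.image (·.subtype (· ∉ S))) (k - 1) r := by
  have hsize : ∀ M ∈ Lines', #(M.subtype (· ∉ S)) = k - 1 := fun M hM => by
    rw [card_subtype, filter_notMem_eq_sdiff, card_sdiff, inter_comm, hmeet M hM,
      h.line_size M (hsub hM)]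
  have hcollin (a b : {p // p ∉ S}) :
      Collin (Lines'.image (·.subtype (· ∉ S))) a b ↔ Collin Lines a b :=
    collin_image_subtype.trans (collin_iff_of_subset hsub fun M hM => hmem M hM a a.2)
  refine ⟨forall_mem_image.2 hsize, fun a => ?_, ?_, fun a => ?_⟩
  · have hfilter : Lines'.filter (a ∈ ·.subtype (· ∉ S)) = Lines.filter (↑a ∈ ·) := by
      ext M
      simp only [mem_filter, mem_subtype]
      exact ⟨fun hM => ⟨hsub hM.1, hM.2⟩, fun hM => ⟨hmem M hM.1 a a.2 hM.2, hM.2⟩⟩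
    rw [filter_image, card_image_of_injOn, hfilter, h.point_deg]
    intro M hM N hN hMN
    have hM' := (mem_filter.1 hM).1
    exact h.eq_of_subtype_eq (hsub hM') (hsub (mem_filter.1 hN).1)
      (by rw [hsize M hM']; omega) hMN
  · rintro a b hab _ hA haA hbA _ hB haB hbB
    obtain ⟨M, hM, rfl⟩ := mem_image.1 hA
    obtain ⟨N, hN, rfl⟩ := mem_image.1 hB
    rw [mem_subtype] at haA hbA haB hbB
    rw [h.plinear a b (Subtype.coe_ne_coe.2 hab) M (hsub hM) haA hbA N (hsub hN) haB hbB]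
  · obtain ⟨N, hN, hNopp⟩ := hopp a a.2
    exact ⟨N.subtype _, mem_image_of_mem _ hN, fun b => by rw [mem_subtype, hNopp, hcollin]⟩

end IsPentGeom

theorem pent_remove_point_opp_general {P : Type} [DecidableEq P]
    {Lines : Finset (Finset P)} {k : ℕ} (hk : 2 < k)
    (h : IsPentGeom Lines k k) (x : P) (L : Finset P) (hL : L ∈ Lines)
    (hopp : ∀ y : P, y ∈ L ↔ ¬ Collin Lines x y) :
    IsPentGeom
      ((Lines.erase L).image (fun M => M.subtype (fun p => p ∉ insert x L)))
      (k - 1) k := by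
  refine h.restrict hk (erase_subset L Lines) ?_ ?_ ?_
  · intro M hM p hp hpM
    exact mem_erase.2 ⟨fun hML => hp (mem_insert_of_mem (hML ▸ hpM)), hM⟩
  · intro p hp
    obtain ⟨N, hN, hpN⟩ := h.opp p
    rw [mem_insert, not_or] at hp
    exact ⟨N, mem_erase.2 ⟨h.isOppLine_ne_of_notMem hk.le le_rfl hL hopp hp.1 hp.2 hpN, hN⟩, hpN⟩
  · intro M hM
    exact h.card_inter_insert_of_isOppLine hk.le le_rfl hL hopp (mem_of_mem_erase hM)
      (ne_of_mem_erase hM)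

/-- Removing a point x and its opposite line x^opp from a PENT(k, k) with k > 2
(deleting x and all points of x^opp, dropping the line x^opp, and truncating every
remaining line to the surviving points) yields a PENT(k-1, k). -/
theorem pent_remove_point_opp {P : Type} [Fintype P] [DecidableEq P]
    {Lines : Finset (Finset P)} {k : ℕ} (hk : 2 < k)
    (h : IsPentGeom Lines k k) (x : P) (L : Finset P) (hL : L ∈ Lines)
    (hopp : ∀ y : P, y ∈ L ↔ ¬ Collin Lines x y) :
    IsPentGeom
      ((Lines.erase L).image (fun M => M.subtype (fun p => p ∉ insert x L)))
      (k - 1) k :=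
  pent_remove_point_opp_general hk h x L hL hopp
end

section
/- Suppose there exists a PENT(5, r) with r ≡ 0 (mod 5) and a 5-GDD of type (4r+6)^{10t+1} for some t ≥ 0, together with a degenerate PENT(5, r) structure filled into each group. Then there exists a PENT(5, (10r + 15)t + r). More precisely: if a PENT(5, r) exists and a 5-GDD of type v^u exists with v = 4r + 6, then a PENT(5, u·r + 3(u−1)/2) exists whenever u is odd. -/
/-!
Take as lines the blocks of the GDD together with a copy of the PENT(k, r) on every group.
Two points of different groups lie on exactly one block and never on a group line, so a point
is collinear with everything outside its group; hence its opposite line in the copy on its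
group is still opposite in the union, and partial linearity splits into the two cases. The
blocks through a point `x` partition the points outside its group into sets of size `k - 1`,
so for `k = 5` and `u` groups of size `4r + 6` the point `x` is on `(2r + 3)(u - 1)/2` blocks
and `r` group lines, i.e. on `ur + 3(u - 1)/2` lines in total.
-/

theorem Finset.exists_embedding_univ_map_eq {V : Type} {n : ℕ} (G : Finset V) (hG : G.card = n) :
    ∃ e : Fin n ↪ V, Finset.univ.map e = G :=
  ⟨(G.equivFinOfCardEq hG).symm.toEmbedding.trans (Function.Embedding.subtype _), by
    rw [← Finset.map_map, Finset.map_univ_equiv, Finset.univ_eq_attach, Finset.attach_map_val]⟩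

section
variable {V : Type} [DecidableEq V]

/-- A PENT(k, r) whose point set is the finset `G` of the ambient type. -/
structure IsPentGeomOn (G : Finset V) (Lines : Finset (Finset V)) (k r : ℕ) : Prop where
  subset : ∀ L ∈ Lines, L ⊆ G
  line_size : ∀ L ∈ Lines, L.card = k
  point_deg : ∀ x ∈ G, (Lines.filter (fun L => x ∈ L)).card = r
  plinear : ∀ x y : V, x ≠ y → ∀ L ∈ Lines, x ∈ L → y ∈ L →
      ∀ M ∈ Lines, x ∈ M → y ∈ M → L = M
  opp : ∀ x ∈ G, ∃ L ∈ Lines, ∀ y ∈ G, y ∈ L ↔ ¬ Collin Lines x y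

theorem collin_map_iff {P : Type} [DecidableEq P] (Lines : Finset (Finset P)) (e : P ↪ V)
    (a b : P) :
    Collin (Lines.map (Finset.mapEmbedding e).toEmbedding) (e a) (e b) ↔ Collin Lines a b := by
  simp [Collin]

theorem IsPentGeom.isPentGeomOn_map {P : Type} [DecidableEq P] [Fintype P]
    {Lines : Finset (Finset P)} {k r : ℕ} (h : IsPentGeom Lines k r) (e : P ↪ V) :
    IsPentGeomOn (Finset.univ.map e) (Lines.map (Finset.mapEmbedding e).toEmbedding) k r where
  subset := by
    simp only [Finset.mem_map, RelEmbedding.coe_toEmbedding, Finset.mapEmbedding_apply]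
    rintro _ ⟨L, -, rfl⟩
    exact Finset.map_subset_map.2 L.subset_univ
  line_size := by
    simp only [Finset.mem_map, RelEmbedding.coe_toEmbedding, Finset.mapEmbedding_apply]
    rintro _ ⟨L, hL, rfl⟩
    rw [Finset.card_map, h.line_size L hL]
  point_deg := by
    simp only [Finset.mem_map, Finset.mem_univ, true_and]
    rintro _ ⟨a, rfl⟩
    rw [Finset.filter_map, Finset.card_map, ← h.point_deg a]
    simp [Function.comp_def]
  plinear := by
    simp only [Finset.mem_map, RelEmbedding.coe_toEmbedding, Finset.mapEmbedding_apply]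
    rintro x y hxy _ ⟨L, hL, rfl⟩ hxL hyL _ ⟨M, hM, rfl⟩ hxM hyM
    obtain ⟨a, haL, rfl⟩ := Finset.mem_map.1 hxL
    obtain ⟨b, hbL, rfl⟩ := Finset.mem_map.1 hyL
    rw [Finset.mem_map' e] at hxM hyM
    rw [h.plinear a b (ne_of_apply_ne e hxy) L hL haL hbL M hM hxM hyM]
  opp := by
    simp only [Finset.mem_map, Finset.mem_univ, true_and]
    rintro _ ⟨a, rfl⟩
    obtain ⟨L, hL, hopp⟩ := h.opp a
    refine ⟨L.map e, ⟨L, hL, rfl⟩, ?_⟩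
    rintro _ ⟨b, rfl⟩
    rw [Finset.mem_map' e, collin_map_iff, hopp]

theorem exists_isPentGeomOn_of_card_eq {n k r : ℕ}
    (h : ∃ Lines : Finset (Finset (Fin n)), IsPentGeom Lines k r) {G : Finset V}
    (hG : G.card = n) : ∃ Lines, IsPentGeomOn G Lines k r := by
  obtain ⟨Lines, hLines⟩ := h
  obtain ⟨e, rfl⟩ := G.exists_embedding_univ_map_eq hG
  exact ⟨_, hLines.isPentGeomOn_map e⟩

end

namespace IsGDD

variable {V : Type} [DecidableEq V] {k : ℕ} {Groups Blocks : Finset (Finset V)}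
  {G G' B B' : Finset V} {x y : V}

theorem eq_of_mem_of_mem_s16 (hg : IsGDD k Groups Blocks) (hG : G ∈ Groups) (hG' : G' ∈ Groups)
    (hx : x ∈ G) (hx' : x ∈ G') : G = G' :=
  (hg.partition x).unique ⟨hG, hx⟩ ⟨hG', hx'⟩

theorem notMem_of_mem_block (hg : IsGDD k Groups Blocks) (hB : B ∈ Blocks) (hxB : x ∈ B)
    (hyB : y ∈ B) (hxy : x ≠ y) (hG : G ∈ Groups) (hxG : x ∈ G) : y ∉ G :=
  fun hyG => hg.within_pair x y hxy G hG hxG hyG B hB ⟨hxB, hyB⟩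

theorem exists_block (hg : IsGDD k Groups Blocks) (hG : G ∈ Groups) (hxG : x ∈ G)
    (hyG : y ∉ G) : ∃ B ∈ Blocks, x ∈ B ∧ y ∈ B := by
  have hxy : x ≠ y := by rintro rfl; exact hyG hxG
  obtain ⟨B, ⟨hB, hxB, hyB⟩, -⟩ := hg.cross_pair x y hxy fun G' hG' ⟨hxG', hyG'⟩ =>
    hyG (hg.eq_of_mem_of_mem_s16 hG' hG hxG' hxG ▸ hyG')
  exact ⟨B, hB, hxB, hyB⟩

theorem block_eq (hg : IsGDD k Groups Blocks) (hxy : x ≠ y) (hB : B ∈ Blocks) (hxB : x ∈ B)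
    (hyB : y ∈ B) (hB' : B' ∈ Blocks) (hxB' : x ∈ B') (hyB' : y ∈ B') : B = B' := by
  obtain ⟨_, -, huniq⟩ := hg.cross_pair x y hxy fun G hG ⟨hxG, hyG⟩ =>
    hg.notMem_of_mem_block hB hxB hyB hxy hG hxG hyG
  exact (huniq B ⟨hB, hxB, hyB⟩).trans (huniq B' ⟨hB', hxB', hyB'⟩).symm

theorem card_filter_mem_mul [Fintype V] (hg : IsGDD k Groups Blocks) (hG : G ∈ Groups)
    (hxG : x ∈ G) :
    (Blocks.filter (x ∈ ·)).card * (k - 1) = Fintype.card V - G.card := by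
  have hcover : Finset.univ \ G = (Blocks.filter (x ∈ ·)).biUnion (·.erase x) := by
    ext y
    simp only [Finset.mem_sdiff, Finset.mem_univ, true_and, Finset.mem_biUnion,
      Finset.mem_filter, Finset.mem_erase]
    constructor
    · intro hyG
      obtain ⟨B, hB, hxB, hyB⟩ := hg.exists_block hG hxG hyG
      exact ⟨B, ⟨hB, hxB⟩, by rintro rfl; exact hyG hxG, hyB⟩
    · rintro ⟨B, ⟨hB, hxB⟩, hyx, hyB⟩
      exact hg.notMem_of_mem_block hB hxB hyB (Ne.symm hyx) hG hxG
  have hdisj : (↑(Blocks.filter (x ∈ ·)) : Set (Finset V)).PairwiseDisjoint (·.erase x) := by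
    intro B hB B' hB' hne
    rw [Finset.mem_coe, Finset.mem_filter] at hB hB'
    refine Finset.disjoint_left.2 fun y hy hy' => hne ?_
    rw [Finset.mem_erase] at hy hy'
    exact hg.block_eq (Ne.symm hy.1) hB.1 hB.2 hy.2 hB'.1 hB'.2 hy'.2
  rw [← Finset.card_univ, ← Finset.card_sdiff_of_subset G.subset_univ, hcover,
    Finset.card_biUnion hdisj, Finset.sum_const_nat]
  intro B hB
  rw [Finset.mem_filter] at hB
  rw [Finset.card_erase_of_mem hB.2, hg.block_size B hB.1]

def overlay (Blocks Groups : Finset (Finset V)) (F : Finset V → Finset (Finset V)) :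
    Finset (Finset V) :=
  Blocks ∪ Groups.biUnion F

variable {F : Finset V → Finset (Finset V)} {r : ℕ}

theorem mem_overlay {L : Finset V} :
    L ∈ overlay Blocks Groups F ↔ L ∈ Blocks ∨ ∃ G ∈ Groups, L ∈ F G := by
  simp [overlay]

theorem mem_of_mem_overlay (hg : IsGDD k Groups Blocks)
    (hF : ∀ G ∈ Groups, IsPentGeomOn G (F G) k r) {L : Finset V}
    (hL : L ∈ overlay Blocks Groups F) (hxy : x ≠ y) (hxL : x ∈ L) (hyL : y ∈ L)
    (hG : G ∈ Groups) (hxG : x ∈ G) (hyG : y ∈ G) : L ∈ F G := by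
  rcases mem_overlay.1 hL with hLB | ⟨G', hG', hLG'⟩
  · exact absurd hyG (hg.notMem_of_mem_block hLB hxL hyL hxy hG hxG)
  · rwa [hg.eq_of_mem_of_mem_s16 hG hG' hxG ((hF G' hG').subset L hLG' hxL)]

theorem mem_blocks_of_mem_overlay (hg : IsGDD k Groups Blocks)
    (hF : ∀ G ∈ Groups, IsPentGeomOn G (F G) k r) {L : Finset V}
    (hL : L ∈ overlay Blocks Groups F) (hxL : x ∈ L) (hyL : y ∈ L)
    (hG : G ∈ Groups) (hxG : x ∈ G) (hyG : y ∉ G) : L ∈ Blocks := by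
  rcases mem_overlay.1 hL with hLB | ⟨G', hG', hLG'⟩
  · exact hLB
  · have hLsub := (hF G' hG').subset L hLG'
    rw [hg.eq_of_mem_of_mem_s16 hG' hG (hLsub hxL) hxG] at hLsub
    exact absurd (hLsub hyL) hyG

theorem disjoint_blocks (hg : IsGDD k Groups Blocks) (hk : 2 ≤ k)
    (hF : ∀ G ∈ Groups, IsPentGeomOn G (F G) k r) (hG : G ∈ Groups) : Disjoint Blocks (F G) := by
  refine Finset.disjoint_left.2 fun B hB hBG => ?_
  obtain ⟨x, hxB, y, hyB, hxy⟩ := Finset.one_lt_card.1 (hg.block_size B hB ▸ hk)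
  have hBsub := (hF G hG).subset B hBG
  exact hg.notMem_of_mem_block hB hxB hyB hxy hG (hBsub hxB) (hBsub hyB)

theorem filter_mem_overlay (hg : IsGDD k Groups Blocks)
    (hF : ∀ G ∈ Groups, IsPentGeomOn G (F G) k r) (hG : G ∈ Groups) (hxG : x ∈ G) :
    (overlay Blocks Groups F).filter (x ∈ ·) = Blocks.filter (x ∈ ·) ∪ (F G).filter (x ∈ ·) := by
  ext L
  simp only [Finset.mem_filter, Finset.mem_union, mem_overlay, or_and_right]
  refine or_congr_right
    ⟨fun ⟨⟨G', hG', hLG'⟩, hxL⟩ => ⟨?_, hxL⟩, fun ⟨hLG, hxL⟩ => ⟨⟨G, hG, hLG⟩, hxL⟩⟩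
  rwa [hg.eq_of_mem_of_mem_s16 hG hG' hxG ((hF G' hG').subset L hLG' hxL)]

theorem collin_overlay_iff (hg : IsGDD k Groups Blocks)
    (hF : ∀ G ∈ Groups, IsPentGeomOn G (F G) k r) (hG : G ∈ Groups) (hxG : x ∈ G)
    (hyG : y ∈ G) : Collin (overlay Blocks Groups F) x y ↔ Collin (F G) x y := by
  by_cases hxy : x = y
  · simp [Collin, hxy]
  simp only [Collin, hxy, false_or]
  constructor
  · rintro ⟨L, hL, hxL, hyL⟩
    exact ⟨L, hg.mem_of_mem_overlay hF hL hxy hxL hyL hG hxG hyG, hxL, hyL⟩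
  · rintro ⟨L, hL, hxL, hyL⟩
    exact ⟨L, mem_overlay.2 (Or.inr ⟨G, hG, hL⟩), hxL, hyL⟩

theorem collin_overlay_of_notMem (hg : IsGDD k Groups Blocks) (hG : G ∈ Groups) (hxG : x ∈ G)
    (hyG : y ∉ G) : Collin (overlay Blocks Groups F) x y := by
  obtain ⟨B, hB, hxB, hyB⟩ := hg.exists_block hG hxG hyG
  exact Or.inr ⟨B, mem_overlay.2 (Or.inl hB), hxB, hyB⟩

theorem isPentGeom_overlay (hg : IsGDD k Groups Blocks) (hk : 2 ≤ k)
    (hF : ∀ G ∈ Groups, IsPentGeomOn G (F G) k r) {b : ℕ}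
    (hb : ∀ x, (Blocks.filter (x ∈ ·)).card = b) :
    IsPentGeom (overlay Blocks Groups F) k (r + b) where
  line_size L hL := by
    rcases mem_overlay.1 hL with hLB | ⟨G, hG, hLG⟩
    · exact hg.block_size L hLB
    · exact (hF G hG).line_size L hLG
  point_deg x := by
    obtain ⟨G, ⟨hG, hxG⟩, -⟩ := hg.partition x
    have hdisj := (hg.disjoint_blocks hk hF hG).mono (Finset.filter_subset (x ∈ ·) _)
      (Finset.filter_subset (x ∈ ·) _)
    rw [hg.filter_mem_overlay hF hG hxG, Finset.card_union_of_disjoint hdisj, hb,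
      (hF G hG).point_deg x hxG, add_comm]
  plinear x y hxy L hL hxL hyL M hM hxM hyM := by
    obtain ⟨G, ⟨hG, hxG⟩, -⟩ := hg.partition x
    by_cases hyG : y ∈ G
    · exact (hF G hG).plinear x y hxy L (hg.mem_of_mem_overlay hF hL hxy hxL hyL hG hxG hyG)
        hxL hyL M (hg.mem_of_mem_overlay hF hM hxy hxM hyM hG hxG hyG) hxM hyM
    · exact hg.block_eq hxy (hg.mem_blocks_of_mem_overlay hF hL hxL hyL hG hxG hyG) hxL hyL
        (hg.mem_blocks_of_mem_overlay hF hM hxM hyM hG hxG hyG) hxM hyM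
  opp x := by
    obtain ⟨G, ⟨hG, hxG⟩, -⟩ := hg.partition x
    obtain ⟨L, hL, hopp⟩ := (hF G hG).opp x hxG
    refine ⟨L, mem_overlay.2 (Or.inr ⟨G, hG, hL⟩), fun y => ?_⟩
    by_cases hyG : y ∈ G
    · rw [hg.collin_overlay_iff hF hG hxG hyG, hopp y hyG]
    · exact iff_of_false (fun hyL => hyG ((hF G hG).subset L hL hyL))
        (not_not_intro (hg.collin_overlay_of_notMem hG hxG hyG))

theorem exists_isPentGeom (hg : IsGDD k Groups Blocks) (hk : 2 ≤ k)
    (hgroups : ∀ G ∈ Groups, ∃ Lines, IsPentGeomOn G Lines k r) {b : ℕ}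
    (hb : ∀ x, (Blocks.filter (x ∈ ·)).card = b) :
    ∃ Lines : Finset (Finset V), IsPentGeom Lines k (r + b) := by
  classical
  let F (G : Finset V) := if h : ∃ Lines, IsPentGeomOn G Lines k r then h.choose else ∅
  have hF : ∀ G ∈ Groups, IsPentGeomOn G (F G) k r := fun G hG => by
    simpa only [F, dif_pos (hgroups G hG)] using (hgroups G hG).choose_spec
  exact ⟨_, hg.isPentGeom_overlay hk hF hb⟩

end IsGDD

/-- If a PENT(5, r) exists and a 5-GDD of type v^u exists with v = 4r + 6 and u odd,
then a PENT(5, u·r + 3(u-1)/2) exists (overlaying each group with a copy of the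
PENT(5, r)). -/
theorem pent5_gdd_construction (r u : ℕ) (hu : Odd u)
    (hpent : ∃ Lines : Finset (Finset (Fin (4 * r + 6))), IsPentGeom Lines 5 r)
    (hgdd : ∃ Groups Blocks : Finset (Finset (Fin ((4 * r + 6) * u))),
      IsGDD 5 Groups Blocks ∧
      Groups.val.map Finset.card = Multiset.replicate u (4 * r + 6)) :
    ∃ Lines : Finset (Finset (Fin (4 * (u * r + 3 * (u - 1) / 2) + 6))),
      IsPentGeom Lines 5 (u * r + 3 * (u - 1) / 2) := by
  obtain ⟨s, rfl⟩ := hu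
  obtain ⟨Groups, Blocks, hg, htype⟩ := hgdd
  have hcard : ∀ G ∈ Groups, G.card = 4 * r + 6 := fun G hG =>
    Multiset.eq_of_mem_replicate (htype ▸ Multiset.mem_map_of_mem _ hG)
  have hb : ∀ x, (Blocks.filter (x ∈ ·)).card = s * (2 * r + 3) := fun x => by
    obtain ⟨G, ⟨hG, hxG⟩, -⟩ := hg.partition x
    have h := hg.card_filter_mem_mul hG hxG
    rw [Fintype.card_fin, hcard G hG] at h
    refine Nat.eq_of_mul_eq_mul_right (by norm_num : 0 < 5 - 1) (h.trans ?_)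
    rw [mul_add, mul_one, Nat.add_sub_cancel]
    ring
  have hr : (2 * s + 1) * r + 3 * (2 * s + 1 - 1) / 2 = r + s * (2 * r + 3) := by
    rw [Nat.add_sub_cancel, mul_left_comm, Nat.mul_div_cancel_left _ two_pos]
    ring
  rw [hr, show 4 * (r + s * (2 * r + 3)) + 6 = (4 * r + 6) * (2 * s + 1) by ring]
  exact hg.exists_isPentGeom (by norm_num)
    (fun G hG => exists_isPentGeomOn_of_card_eq hpent (hcard G hG)) hb
end
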